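/- arXiv:1704.01077 — 9 statements merged into one kernel-verified Lean document; each statement's English description precedes it below -/
import Mathlib

section
/- Let E be a natural number and let γ, γ̃ : ℕ → ℕ be sequences such that γ̃_k ≥ γ_k for all 0 ≤ k ≤ E. Set r = Σ_{k=0}^{E} γ_k and S = Σ_{k=0}^{E} k·γ_k. Then Σ_{k=1}^{E} k · min( γ̃_k , max( r − Σ_{i=0}^{k−1} γ̃_i , 0 ) ) ≤ S. (This is the neighborhood-based lower bound: instantiating γ_k = γ_k(v), the number of vertices at distance k from a vertex v, E = ecc(v), r = r(v), and S = S(v), it says that S̃(v) := Σ_{k=1}^{ecc(v)} k·min{γ̃_k(v), max{r(v) − Σ_{i=0}^{k−1} γ̃_i(v), 0}} is a lower bound on S(v).) -/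
/-!
Pour `r` units greedily into slots of capacities `γ̃ 0, γ̃ 1, …`; the `k`-th summand of the
left-hand side is `k` times the amount landing in slot `k`. The greedy amounts telescope, so
those from slot `j` on add up to at most `max (r - ∑_{i<j} γ̃ i) 0`, which is at most
`∑_{k ≥ j} γ k` because `γ ≤ γ̃`. Since `∑ k • x k = ∑_{j ≥ 1} ∑_{k ≥ j} x k`, these tail
bounds give the weighted bound.
-/

open Finset

section GreedyFill

variable {α : Type*} [AddCommGroup α] [LinearOrder α] [IsOrderedAddMonoid α]

def greedyFill (B : α) (a : ℕ → α) (k : ℕ) : α :=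
  min (a k) (max (B - ∑ i ∈ range k, a i) 0)

theorem min_max_zero_add_max_sub_zero {a : α} (c : α) (ha : 0 ≤ a) :
    min a (max c 0) + max (c - a) 0 = max c 0 := by
  rcases le_total c 0 with hc | hc
  · simp [hc, ha, (sub_le_self c ha).trans hc]
  rcases le_total c a with hca | hca
  · simp [hc, hca, sub_nonpos.2 hca]
  · simp [hc, hca, sub_nonneg.2 hca]

theorem greedyFill_eq_sub (B : α) {a : ℕ → α} (ha : ∀ k, 0 ≤ a k) (k : ℕ) :
    greedyFill B a k =
      max (B - ∑ i ∈ range k, a i) 0 - max (B - ∑ i ∈ range (k + 1), a i) 0 := by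
  rw [eq_sub_iff_add_eq, greedyFill, sum_range_succ, ← sub_sub]
  exact min_max_zero_add_max_sub_zero _ (ha k)

theorem sum_Icc_greedyFill_le (B : α) {a : ℕ → α} (ha : ∀ k, 0 ≤ a k) {j n : ℕ} (hjn : j ≤ n) :
    ∑ k ∈ Icc j n, greedyFill B a k ≤ max (B - ∑ i ∈ range j, a i) 0 := by
  have htel := sum_Icc_sub hjn fun k => -max (B - ∑ i ∈ range k, a i) 0
  simp only [sub_neg_eq_add, neg_add_eq_sub] at htel
  simp only [greedyFill_eq_sub B ha, htel]
  exact sub_le_self _ (le_max_right _ _)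

theorem max_sum_range_sub_sum_range_le_sum_Icc {a b : ℕ → α} {j n : ℕ} (hjn : j ≤ n + 1)
    (ha : ∀ k, 0 ≤ a k) (hab : ∀ i < j, a i ≤ b i) :
    max (∑ i ∈ range (n + 1), a i - ∑ i ∈ range j, b i) 0 ≤ ∑ k ∈ Icc j n, a k := by
  have hsplit := sum_range_add_sum_Ico a hjn
  rw [Ico_add_one_right_eq_Icc] at hsplit
  refine max_le ?_ (sum_nonneg fun k _ => ha k)
  rw [← hsplit, sub_le_iff_le_add, add_comm]
  exact add_le_add_right (sum_le_sum fun i hi => hab i (mem_range.1 hi)) _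

end GreedyFill

section TailSums

variable {M : Type*} [AddCommMonoid M]

theorem sum_Icc_nsmul_eq_sum_Icc_sum_Icc (n : ℕ) (f : ℕ → M) :
    ∑ k ∈ Icc 1 n, k • f k = ∑ j ∈ Icc 1 n, ∑ k ∈ Icc j n, f k := by
  rw [sum_comm' (t' := Icc 1 n) (s' := fun k => Icc 1 k)
    fun j k => by simp only [mem_Icc]; omega]
  simp

theorem sum_Icc_nsmul_le_of_sum_Icc_le [PartialOrder M] [IsOrderedAddMonoid M] {n : ℕ}
    {f g : ℕ → M} (h : ∀ j ∈ Icc 1 n, ∑ k ∈ Icc j n, f k ≤ ∑ k ∈ Icc j n, g k) :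
    ∑ k ∈ Icc 1 n, k • f k ≤ ∑ k ∈ Icc 1 n, k • g k := by
  simpa only [sum_Icc_nsmul_eq_sum_Icc_sum_Icc] using sum_le_sum h

end TailSums

/-- Neighborhood-based lower bound (Proposition 1), stated abstractly:
if `γ̃ k ≥ γ k` for all `k ≤ E`, `r = ∑_{k=0}^{E} γ k` and `S = ∑_{k=0}^{E} k·γ k`, then
`∑_{k=1}^{E} k · min(γ̃ k, max(r − ∑_{i=0}^{k−1} γ̃ i, 0)) ≤ S`. -/
theorem stmt0 (E : ℕ) (γ γt : ℕ → ℕ) (h : ∀ k ≤ E, γ k ≤ γt k) :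
    ∑ k ∈ Finset.Icc 1 E, (k : ℤ) *
        min ((γt k : ℤ))
          (max ((∑ i ∈ Finset.range (E + 1), (γ i : ℤ)) -
            ∑ i ∈ Finset.range k, (γt i : ℤ)) 0)
      ≤ ∑ k ∈ Finset.range (E + 1), (k : ℤ) * (γ k : ℤ) := by
  have htail : ∀ j ∈ Icc 1 E,
      ∑ k ∈ Icc j E, greedyFill (∑ i ∈ range (E + 1), (γ i : ℤ)) (fun i => (γt i : ℤ)) k
        ≤ ∑ k ∈ Icc j E, (γ k : ℤ) := fun j hj =>
    have hjE := (mem_Icc.1 hj).2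
    (sum_Icc_greedyFill_le _ (fun k => Int.natCast_nonneg _) hjE).trans <|
      max_sum_range_sub_sum_range_le_sum_Icc (by omega) (fun k => Int.natCast_nonneg _)
        fun i hi => Int.ofNat_le.2 (h i (by omega))
  calc _ = ∑ k ∈ Icc 1 E,
        k • greedyFill (∑ i ∈ range (E + 1), (γ i : ℤ)) (fun i => (γt i : ℤ)) k := by
        simp only [nsmul_eq_mul, greedyFill]
    _ ≤ ∑ k ∈ Icc 1 E, k • (γ k : ℤ) := sum_Icc_nsmul_le_of_sum_Icc_le htail
    _ = _ := by
        rw [range_eq_Ico, sum_eq_sum_Ico_succ_bot E.add_one_pos, zero_add,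
          Ico_add_one_right_eq_Icc]
        simp
end

section
/- Let T be a finite tree (a connected acyclic simple undirected graph) and let s be a vertex of T. Let γ_k(v) denote the number of vertices at distance exactly k from v, let N(s) denote the set of neighbors of s, and let deg(s) = |N(s)|. Then γ_2(s) = Σ_{w ∈ N(s)} γ_1(w) − deg(s), and for every integer k > 2, γ_k(s) = Σ_{w ∈ N(s)} γ_{k−1}(w) − γ_{k−2}(s) · (deg(s) − 1). -/
open Finset SimpleGraph

/-!
For `x ≠ s`, exactly one neighbour of `s` (the second vertex of the path from `s` to `x`) is
one step closer to `x`, and every other neighbour is one step farther, since adjacent vertices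
of a tree have distances to `x` differing by exactly one. Double counting the pairs `(w, x)` with
`w ∈ N(s)` and `d(w, x) = m + 1` therefore gives
`∑_{w ∈ N(s)} γ_{m+1}(w) = γ_{m+2}(s) + (deg s - 1) γ_m(s) + [m = 0]`,
the last term because all `deg s` neighbours see `s` itself at distance `1`.
-/

namespace SimpleGraph

variable {V : Type*} {G : SimpleGraph V}

lemma IsTree.length_eq_dist (hT : G.IsTree) {u v : V} {p : G.Walk u v} (hp : p.IsPath) :
    p.length = G.dist u v := by
  obtain ⟨q, hq, hql⟩ := hT.connected.exists_path_of_dist u v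
  rw [(hT.existsUnique_path u v).unique hp hq, hql]

lemma IsTree.dist_snd_add_one (hT : G.IsTree) {s x : V} {p : G.Walk s x} (hp : p.IsPath)
    (hnil : ¬p.Nil) : G.dist p.snd x + 1 = G.dist s x := by
  rw [← hT.length_eq_dist hp.tail, ← hT.length_eq_dist hp, p.length_tail_add_one hnil]

lemma IsTree.dist_eq_add_one_of_adj_of_ne_snd (hT : G.IsTree) {s x w : V} {p : G.Walk s x}
    (hp : p.IsPath) (hw : G.Adj s w) (hne : w ≠ p.snd) : G.dist w x = G.dist s x + 1 := by
  rw [dist_comm, dist_comm (u := s)]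
  refine (hT.dist_eq_dist_add_one_of_adj x hw).resolve_left fun hcloser => hne ?_
  obtain ⟨q, hq⟩ := hT.connected.exists_walk_length_eq_dist w x
  have hpath : (Walk.cons hw q).IsPath :=
    Walk.isPath_of_length_eq_dist _ <| by
      rw [Walk.length_cons, hq, dist_comm, ← hcloser, dist_comm]
  rw [(hT.existsUnique_path s x).unique hp hpath, Walk.snd_cons]

variable [Fintype V]

/-- `#(G.sphere v k)` is `γ_k(v)`. -/
noncomputable def sphere (G : SimpleGraph V) (v : V) (k : ℕ) : Finset V := {w | G.dist v w = k}

lemma Connected.sphere_zero [DecidableEq V] (hG : G.Connected) (v : V) : G.sphere v 0 = {v} := by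
  ext w
  simp [sphere, hG.dist_eq_zero_iff, eq_comm]

variable [DecidableRel G.Adj]

lemma card_neighborFinset_filter_dist_self (s : V) (m : ℕ) :
    (#{w ∈ G.neighborFinset s | G.dist w s = m} : ℤ) =
      if m = 1 then (G.degree s : ℤ) else 0 := by
  have hdist : ∀ w ∈ G.neighborFinset s, G.dist w s = 1 := fun w hw =>
    dist_eq_one_iff_adj.mpr (G.mem_neighborFinset s w |>.mp hw).symm
  split_ifs with hm
  · rw [filter_true_of_mem (hm ▸ hdist), card_neighborFinset_eq_degree]
  · rw [filter_false_of_mem fun w hw h => hm (h.symm.trans (hdist w hw)), card_empty,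
      Nat.cast_zero]

variable [DecidableEq V]

lemma IsTree.card_neighborFinset_filter_dist_of_ne (hT : G.IsTree) {s x : V} (hxs : s ≠ x)
    (m : ℕ) : (#{w ∈ G.neighborFinset s | G.dist w x = m} : ℤ) =
      (if G.dist s x = m + 1 then 1 else 0) +
        (G.degree s - 1) * if G.dist s x + 1 = m then 1 else 0 := by
  obtain ⟨p, hp, -⟩ := hT.connected.exists_path_of_dist s x
  have hnil : ¬p.Nil := Walk.not_nil_of_ne hxs
  have hsnd : p.snd ∈ G.neighborFinset s := by simpa using p.adj_snd hnil
  have hfar : ∀ w ∈ (G.neighborFinset s).erase p.snd, G.dist w x = G.dist s x + 1 :=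
    fun w hw => hT.dist_eq_add_one_of_adj_of_ne_snd hp
      ((G.mem_neighborFinset s w).mp (mem_of_mem_erase hw)) (ne_of_mem_erase hw)
  rw [natCast_card_filter, ← add_sum_erase _ _ hsnd, sum_congr rfl fun w hw => by rw [hfar w hw],
    sum_const, nsmul_eq_mul, cast_card_erase_of_mem hsnd, card_neighborFinset_eq_degree,
    ← hT.dist_snd_add_one hp hnil]
  simp

lemma IsTree.card_neighborFinset_filter_dist (hT : G.IsTree) (s x : V) (m : ℕ) :
    (#{w ∈ G.neighborFinset s | G.dist w x = m} : ℤ) =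
      (if G.dist s x = m + 1 then 1 else 0) +
        (G.degree s - 1) * (if G.dist s x + 1 = m then 1 else 0) +
          if x = s ∧ m = 1 then 1 else 0 := by
  obtain rfl | hxs := eq_or_ne x s
  · rw [card_neighborFinset_filter_dist_self]
    split_ifs <;> simp_all
  · have hnot : ¬(x = s ∧ m = 1) := fun h => hxs h.1
    rw [hT.card_neighborFinset_filter_dist_of_ne hxs.symm, if_neg hnot, add_zero]

lemma IsTree.sum_card_sphere_neighborFinset (hT : G.IsTree) (s : V) (m : ℕ) :
    ∑ w ∈ G.neighborFinset s, (#(G.sphere w (m + 1)) : ℤ) =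
      #(G.sphere s (m + 2)) + (G.degree s - 1) * #(G.sphere s m) + if m = 0 then 1 else 0 := by
  have hdouble : ∑ w ∈ G.neighborFinset s, #(G.sphere w (m + 1)) =
      ∑ x, #{w ∈ G.neighborFinset s | G.dist w x = m + 1} :=
    sum_card_bipartiteAbove_eq_sum_card_bipartiteBelow _
  rw [← Nat.cast_sum, hdouble, Nat.cast_sum]
  simp only [hT.card_neighborFinset_filter_dist, sum_add_distrib, ← mul_sum, sum_boole]
  split_ifs with hm <;> simp [sphere, hm, filter_eq']

end SimpleGraph

/-- In a finite tree, with `γ k v` the number of vertices at distance exactly `k` from `v`: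
`γ 2 s = ∑_{w ∈ N(s)} γ 1 w − deg s`, and for `k > 2`,
`γ k s = ∑_{w ∈ N(s)} γ (k−1) w − γ (k−2) s · (deg s − 1)`. -/
theorem stmt1 {V : Type*} [Fintype V] [DecidableEq V] (G : SimpleGraph V)
    [DecidableRel G.Adj] (hT : G.IsTree) (s : V) :
    ((Finset.univ.filter fun w => G.dist s w = 2).card : ℤ) =
        (∑ w ∈ G.neighborFinset s,
          ((Finset.univ.filter fun x => G.dist w x = 1).card : ℤ)) - G.degree s ∧
      ∀ k : ℕ, 2 < k →
        ((Finset.univ.filter fun w => G.dist s w = k).card : ℤ) =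
          (∑ w ∈ G.neighborFinset s,
            ((Finset.univ.filter fun x => G.dist w x = k - 1).card : ℤ)) -
            ((Finset.univ.filter fun w => G.dist s w = k - 2).card : ℤ) *
              ((G.degree s : ℤ) - 1) := by
  refine ⟨?_, fun k hk => ?_⟩
  · have h := hT.sum_card_sphere_neighborFinset s 0
    rw [hT.connected.sphere_zero, card_singleton] at h
    simp only [sphere, zero_add, Nat.cast_one, mul_one, if_pos] at h
    linarith
  · obtain ⟨m, rfl⟩ : ∃ m, k = m + 3 := ⟨k - 3, by omega⟩
    have h := hT.sum_card_sphere_neighborFinset s (m + 1)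
    simp only [sphere, add_assoc, Nat.reduceAdd, Nat.add_one_ne_zero, if_false, add_zero] at h
    simp only [show m + 3 - 1 = m + 2 by omega, show m + 3 - 2 = m + 1 by omega]
    linarith
end

section
/- Let G be a finite connected simple undirected graph and let γ_k(v) denote the number of vertices at distance exactly k from v. For each vertex v define integers γ̃_k(v) recursively by γ̃_1(v) = deg(v), γ̃_2(v) = Σ_{w ∈ N(v)} γ̃_1(w) − deg(v), and γ̃_k(v) = Σ_{w ∈ N(v)} γ̃_{k−1}(w) − γ̃_{k−2}(v)·(deg(v) − 1) for k ≥ 3. Then for every vertex v and every k ≥ 1, γ̃_k(v) ≥ γ_k(v), i.e., the recursively defined quantity is an upper bound on the number of vertices at distance exactly k from v. -/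
open Finset SimpleGraph

/-- The recursively defined upper bound `γ̃` on the number of vertices at each distance:
`γ̃ 1 v = deg v`, `γ̃ 2 v = ∑_{w ∈ N(v)} γ̃ 1 w − deg v`, and for `k ≥ 3`,
`γ̃ k v = ∑_{w ∈ N(v)} γ̃ (k−1) w − γ̃ (k−2) v · (deg v − 1)`. -/
def gammaT {V : Type*} [Fintype V] [DecidableEq V] (G : SimpleGraph V)
    [DecidableRel G.Adj] : ℕ → V → ℤ
  | 0, _ => 1
  | 1, v => G.degree v
  | 2, v => (∑ w ∈ G.neighborFinset v, (G.degree w : ℤ)) - G.degree v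
  | (k + 3), v =>
      (∑ w ∈ G.neighborFinset v, gammaT G (k + 2) w) -
        gammaT G (k + 1) v * ((G.degree v : ℤ) - 1)

/-!
Split by first step, `γ̃ (k + 1) v` counts the non-backtracking walks of length `k + 1` from `v`:
if `B k (u → w)` counts those starting with the step `u → w`, then
`∑_{x ∈ N(w)} B k (w → x) = B (k + 1) (u → w) + B k (w → u)`, and summing the last term over
`w ∈ N(v)` gives `(deg v − 1) · γ̃ k v`, which is the correction term of the recursion.
A vertex at distance `k + 1` is the end of a geodesic, and geodesics do not backtrack: by
induction, the vertices `x` with `d(u, x) = k + 1` and `d(w, x) = k` number at most `B k (u → w)`.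
-/

namespace SimpleGraph

variable {V : Type*} (G : SimpleGraph V)

lemma exists_adj_dist_eq_of_dist_eq_succ {w x : V} {k : ℕ} (h : G.dist w x = k + 1) :
    ∃ y, G.Adj w y ∧ G.dist y x = k := by
  obtain ⟨p, hp⟩ := exists_walk_of_dist_ne_zero (by omega : G.dist w x ≠ 0)
  cases p with
  | nil => simp at h
  | @cons _ y _ hwy q =>
    have hle : G.dist y x ≤ k := by
      have := dist_le q
      simp only [Walk.length_cons] at hp
      omega
    have hge : G.dist w x ≤ G.dist w y + G.dist y x := hwy.reachable.dist_triangle_left x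
    rw [dist_eq_one_iff_adj.mpr hwy] at hge
    exact ⟨y, hwy, by omega⟩

variable [Fintype V] [DecidableEq V] [DecidableRel G.Adj]

/-- For `G.Adj u w`, `G.nonBacktrackingCount k u w` is the number of non-backtracking walks of
length `k + 1` whose first step is `u → w`. -/
def nonBacktrackingCount : ℕ → V → V → ℕ
  | 0, _, _ => 1
  | k + 1, u, w => ∑ x ∈ (G.neighborFinset w).erase u, nonBacktrackingCount k w x

lemma nonBacktrackingCount_succ_add {k : ℕ} {u w : V} (huw : G.Adj u w) :
    G.nonBacktrackingCount (k + 1) u w + G.nonBacktrackingCount k w u =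
      ∑ x ∈ G.neighborFinset w, G.nonBacktrackingCount k w x := by
  rw [nonBacktrackingCount, add_comm]
  exact add_sum_erase _ _ ((mem_neighborFinset _ _ _).mpr huw.symm)

lemma sum_nonBacktrackingCount_succ_to_eq_mul (k : ℕ) (v : V) :
    ∑ w ∈ G.neighborFinset v, (G.nonBacktrackingCount (k + 1) w v : ℤ) =
      (∑ x ∈ G.neighborFinset v, (G.nonBacktrackingCount k v x : ℤ)) * (G.degree v - 1) := by
  have herase : ∀ w ∈ G.neighborFinset v, (G.nonBacktrackingCount (k + 1) w v : ℤ) =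
      ∑ x ∈ G.neighborFinset v, (G.nonBacktrackingCount k v x : ℤ) -
        G.nonBacktrackingCount k v w := by
    intro w hw
    rw [nonBacktrackingCount, Nat.cast_sum, sum_erase_eq_sub hw]
  rw [sum_congr rfl herase, sum_sub_distrib, sum_const, card_neighborFinset_eq_degree,
    nsmul_eq_mul]
  ring

lemma gammaT_succ_eq_sum_nonBacktrackingCount :
    ∀ (k : ℕ) (v : V),
      gammaT G (k + 1) v = ∑ w ∈ G.neighborFinset v, (G.nonBacktrackingCount k v w : ℤ)
  | 0, v => by simp [gammaT, nonBacktrackingCount]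
  | 1, v => by
    have hcount : ∀ w ∈ G.neighborFinset v,
        (G.nonBacktrackingCount 1 v w : ℤ) = G.degree w - 1 := by
      intro w hw
      have := G.nonBacktrackingCount_succ_add (k := 0) ((mem_neighborFinset _ _ _).mp hw)
      simp only [nonBacktrackingCount, sum_const, card_neighborFinset_eq_degree,
        smul_eq_mul, mul_one] at this ⊢
      omega
    rw [sum_congr rfl hcount, sum_sub_distrib, gammaT]
    simp [card_neighborFinset_eq_degree]
  | k + 2, v => by
    have hsplit : ∀ w ∈ G.neighborFinset v, gammaT G (k + 2) w =
        G.nonBacktrackingCount (k + 2) v w + G.nonBacktrackingCount (k + 1) w v := by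
      intro w hw
      rw [gammaT_succ_eq_sum_nonBacktrackingCount (k + 1) w, ← Nat.cast_sum,
        ← G.nonBacktrackingCount_succ_add ((mem_neighborFinset _ _ _).mp hw), Nat.cast_add]
    rw [gammaT, sum_congr rfl hsplit, sum_add_distrib, sum_nonBacktrackingCount_succ_to_eq_mul,
      gammaT_succ_eq_sum_nonBacktrackingCount k v]
    ring

lemma card_dist_succ_dist_le_nonBacktrackingCount (k : ℕ) {u w : V} (huw : G.Adj u w) :
    #{x | G.dist u x = k + 1 ∧ G.dist w x = k} ≤ G.nonBacktrackingCount k u w := by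
  induction k generalizing u w with
  | zero =>
    refine card_le_one.mpr fun x hx y hy => ?_
    have eq_w : ∀ z ∈ ({x | G.dist u x = 1 ∧ G.dist w x = 0} : Finset V), z = w := by
      intro z hz
      obtain ⟨huz, hwz⟩ := (mem_filter.mp hz).2
      have hreach : G.Reachable w z :=
        huw.symm.reachable.trans (dist_eq_one_iff_adj.mp huz).reachable
      exact (hreach.dist_eq_zero_iff.mp hwz).symm
    rw [eq_w x hx, eq_w y hy]
  | succ k ih =>
    -- the second vertex of a geodesic from `w` to `x` cannot be `u`, which is farther from `x`
    have hsub : ({x | G.dist u x = k + 2 ∧ G.dist w x = k + 1} : Finset V) ⊆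
        ((G.neighborFinset w).erase u).biUnion
          fun y => {x | G.dist w x = k + 1 ∧ G.dist y x = k} := by
      intro x hx
      obtain ⟨hux, hwx⟩ := (mem_filter.mp hx).2
      obtain ⟨y, hwy, hyx⟩ := G.exists_adj_dist_eq_of_dist_eq_succ hwx
      have hyu : y ≠ u := by rintro rfl; omega
      exact mem_biUnion.mpr ⟨y, mem_erase.mpr ⟨hyu, (mem_neighborFinset _ _ _).mpr hwy⟩,
        mem_filter.mpr ⟨mem_univ _, hwx, hyx⟩⟩
    calc _ ≤ _ := card_le_card hsub
      _ ≤ _ := card_biUnion_le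
      _ ≤ _ := sum_le_sum fun y hy =>
        ih ((mem_neighborFinset _ _ _).mp (mem_of_mem_erase hy))

lemma card_dist_eq_succ_le_gammaT (k : ℕ) (v : V) :
    (#{x | G.dist v x = k + 1} : ℤ) ≤ gammaT G (k + 1) v := by
  have hsub : ({x | G.dist v x = k + 1} : Finset V) ⊆
      (G.neighborFinset v).biUnion fun w => {x | G.dist v x = k + 1 ∧ G.dist w x = k} := by
    intro x hx
    have hvx := (mem_filter.mp hx).2
    obtain ⟨w, hvw, hwx⟩ := G.exists_adj_dist_eq_of_dist_eq_succ hvx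
    exact mem_biUnion.mpr ⟨w, (mem_neighborFinset _ _ _).mpr hvw,
      mem_filter.mpr ⟨mem_univ _, hvx, hwx⟩⟩
  rw [gammaT_succ_eq_sum_nonBacktrackingCount, ← Nat.cast_sum, Nat.cast_le]
  calc _ ≤ _ := card_le_card hsub
    _ ≤ _ := card_biUnion_le
    _ ≤ _ := sum_le_sum fun w hw =>
      G.card_dist_succ_dist_le_nonBacktrackingCount k ((mem_neighborFinset _ _ _).mp hw)

end SimpleGraph

theorem stmt2_general {V : Type*} [Fintype V] [DecidableEq V] (G : SimpleGraph V)
    [DecidableRel G.Adj] (v : V) (k : ℕ) (hk : 1 ≤ k) :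
    ((Finset.univ.filter fun w => G.dist v w = k).card : ℤ) ≤ gammaT G k v := by
  obtain ⟨j, rfl⟩ := Nat.exists_eq_add_of_le' hk
  exact G.card_dist_eq_succ_le_gammaT j v

/-- In a finite connected simple undirected graph, the recursively defined `γ̃ k v` is an
upper bound on the number `γ k v` of vertices at distance exactly `k` from `v`, for `k ≥ 1`. -/
theorem stmt2 {V : Type*} [Fintype V] [DecidableEq V] (G : SimpleGraph V)
    [DecidableRel G.Adj] (hG : G.Connected) (v : V) (k : ℕ) (hk : 1 ≤ k) :
    ((Finset.univ.filter fun w => G.dist v w = k).card : ℤ) ≤ gammaT G k v :=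
  stmt2_general G v k hk
end

section
/- Let G be a finite simple undirected graph, v a vertex, and d ≥ 0 an integer. Let B_d(v) = {w : d(v,w) ≤ d} be the set of vertices at distance at most d from v, let n_d(v) = |B_d(v)|, let r(v) be the number of vertices reachable from v, and let γ_{d+1}(v) be the number of vertices at distance exactly d+1 from v. If ũ is any upper bound on γ_{d+1}(v), i.e., ũ ≥ γ_{d+1}(v), then S(v) ≥ Σ_{w ∈ B_d(v)} d(v,w) − ũ + (d+2)·(r(v) − n_d(v)). -/
open Finset SimpleGraph
open scoped Classical

/- Every vertex beyond the ball `B_d(v)` is at distance at least `d + 1`, and at least `d + 2`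
unless it lies in the sphere of radius `d + 1`; so the part of `S(v)` outside the ball is at least
`(d + 2)·(r(v) − n_d(v))` minus the size of that sphere, which is at most `ũ`. -/

theorem Finset.succ_succ_mul_card_le_sum_add_card_filter_eq_succ {α : Type*} (s : Finset α)
    (f : α → ℕ) (d : ℕ) (h : ∀ x ∈ s, d < f x) :
    (d + 2) * #s ≤ ∑ x ∈ s, f x + #{x ∈ s | f x = d + 1} := by
  rw [card_filter, ← sum_add_distrib, mul_comm, ← smul_eq_mul, ← sum_const]
  refine sum_le_sum fun x hx => ?_
  have := h x hx
  split_ifs <;> omega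

/-- The BFSCut lower bound (Lemma 2): if `ũ ≥ γ_{d+1}(v)` then
`S(v) ≥ ∑_{w ∈ B_d(v)} d(v,w) − ũ + (d+2)·(r(v) − n_d(v))`. -/
theorem stmt3 {V : Type*} [Fintype V] (G : SimpleGraph V) (v : V) (d : ℕ) (u : ℕ)
    (hu : (Finset.univ.filter fun w => G.Reachable v w ∧ G.dist v w = d + 1).card ≤ u) :
    (∑ w ∈ Finset.univ.filter (fun w => G.Reachable v w ∧ G.dist v w ≤ d), (G.dist v w : ℤ))
        - (u : ℤ) + ((d : ℤ) + 2) *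
          (((Finset.univ.filter fun w => G.Reachable v w).card : ℤ) -
            ((Finset.univ.filter fun w => G.Reachable v w ∧ G.dist v w ≤ d).card : ℤ))
      ≤ ∑ w ∈ Finset.univ.filter (fun w => G.Reachable v w), (G.dist v w : ℤ) := by
  set R := univ.filter fun w => G.Reachable v w
  have hball : univ.filter (fun w => G.Reachable v w ∧ G.dist v w ≤ d) = {w ∈ R | G.dist v w ≤ d} :=
    (filter_filter _ _ _).symm
  have hsphere : univ.filter (fun w => G.Reachable v w ∧ G.dist v w = d + 1) =
      {w ∈ {w ∈ R | ¬G.dist v w ≤ d} | G.dist v w = d + 1} := by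
    ext w
    simp only [R, mem_filter, mem_univ, true_and, and_assoc]
    exact and_congr_right fun _ => by omega
  have houter := succ_succ_mul_card_le_sum_add_card_filter_eq_succ
    {w ∈ R | ¬G.dist v w ≤ d} (G.dist v) d fun _ hw => not_le.mp (mem_filter.mp hw).2
  have hsum := sum_filter_add_sum_filter_not R (G.dist v · ≤ d) fun w => (G.dist v w : ℤ)
  have hcard := card_filter_add_card_filter_not (s := R) (G.dist v · ≤ d)
  rw [hsphere] at hu
  rw [hball, ← hsum, ← hcard]
  have houter_int := (Nat.cast_le (α := ℤ)).mpr (houter.trans (Nat.add_le_add_left hu _))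
  push_cast [Nat.cast_sum] at houter_int ⊢
  linarith
end

section
/- Let G be a finite simple undirected graph on n vertices, v a vertex with r(v) ≥ 2, and d ≥ 0 an integer. Let B_d(v) = {w : d(v,w) ≤ d}, n_d(v) = |B_d(v)|, and let ũ ≥ γ_{d+1}(v) be an upper bound on the number of vertices at distance exactly d+1 from v. Then the farness of v satisfies f(v) ≥ (n−1)·( Σ_{w ∈ B_d(v)} d(v,w) − ũ + (d+2)·(r(v) − n_d(v)) ) / (r(v) − 1)². -/
open Finset SimpleGraph
open scoped Classical

/-- Each `x` with `f x > d` contributes at least `d + 2`, except those with `f x = d + 1`,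
which fall short by exactly one and are paid for by the last summand. -/
theorem Finset.sum_filter_le_add_mul_card_filter_lt_le {α : Type*} (s : Finset α) (f : α → ℕ)
    (d : ℕ) :
    ∑ x ∈ s.filter (f · ≤ d), f x + (d + 2) * #(s.filter (d < f ·)) ≤
      ∑ x ∈ s, f x + #(s.filter (f · = d + 1)) := by
  set far := s.filter (d < f ·)
  have hsplit : ∑ x ∈ s, f x = ∑ x ∈ s.filter (f · ≤ d), f x + ∑ x ∈ far, f x := by
    simp only [far, ← not_le]
    exact (sum_filter_add_sum_filter_not s _ f).symm
  have hpoint : ∀ x ∈ far, d + 2 ≤ f x + if f x = d + 1 then 1 else 0 := by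
    intro x hx
    have : d < f x := (mem_filter.1 hx).2
    split_ifs <;> omega
  have hfar : (d + 2) * #far ≤ ∑ x ∈ far, f x + #(far.filter (f · = d + 1)) := by
    calc (d + 2) * #far = ∑ _x ∈ far, (d + 2) := by rw [sum_const, smul_eq_mul, mul_comm]
      _ ≤ ∑ x ∈ far, (f x + if f x = d + 1 then 1 else 0) := sum_le_sum hpoint
      _ = ∑ x ∈ far, f x + #(far.filter (f · = d + 1)) := by
        rw [sum_add_distrib, sum_boole, Nat.cast_id]
  have hsub : #(far.filter (f · = d + 1)) ≤ #(s.filter (f · = d + 1)) :=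
    card_le_card (filter_subset_filter _ (filter_subset _ s))
  omega

theorem stmt4_general {V : Type*} [Fintype V] (G : SimpleGraph V) (v : V) (d : ℕ) (u : ℕ)
    (hu : (Finset.univ.filter fun w => G.Reachable v w ∧ G.dist v w = d + 1).card ≤ u) :
    ((Fintype.card V : ℝ) - 1) *
        ((∑ w ∈ Finset.univ.filter (fun w => G.Reachable v w ∧ G.dist v w ≤ d),
            (G.dist v w : ℝ))
          - (u : ℝ) + ((d : ℝ) + 2) *
            (((Finset.univ.filter fun w => G.Reachable v w).card : ℝ) -
              ((Finset.univ.filter fun w => G.Reachable v w ∧ G.dist v w ≤ d).card : ℝ))) /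
        (((Finset.univ.filter fun w => G.Reachable v w).card : ℝ) - 1) ^ 2
      ≤ ((Fintype.card V : ℝ) - 1) *
          (∑ w ∈ Finset.univ.filter (fun w => G.Reachable v w), (G.dist v w : ℝ)) /
          (((Finset.univ.filter fun w => G.Reachable v w).card : ℝ) - 1) ^ 2 := by
  rw [← filter_filter] at hu ⊢
  set R := univ.filter fun w => G.Reachable v w
  have hbound : ((∑ x ∈ R.filter (G.dist v · ≤ d), G.dist v x : ℕ) : ℝ) +
      (d + 2) * #(R.filter (d < G.dist v ·)) ≤
      ((∑ x ∈ R, G.dist v x : ℕ) : ℝ) + #(R.filter (G.dist v · = d + 1)) := by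
    exact_mod_cast sum_filter_le_add_mul_card_filter_lt_le R (G.dist v) d
  have hcard : (#R : ℝ) = #(R.filter (G.dist v · ≤ d)) + #(R.filter (d < G.dist v ·)) := by
    simp only [← not_le]
    exact_mod_cast (card_filter_add_card_filter_not _).symm
  have hu' : (#(R.filter (G.dist v · = d + 1)) : ℝ) ≤ u := by exact_mod_cast hu
  have hV : (1 : ℝ) ≤ Fintype.card V := by exact_mod_cast Fintype.card_pos_iff.2 ⟨v⟩
  push_cast at hbound
  gcongr ((Fintype.card V : ℝ) - 1) * ?_ / _
  rw [hcard]
  linarith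

/-- The BFSCut lower bound on farness: if `r(v) ≥ 2` and `ũ ≥ γ_{d+1}(v)`, then
`f(v) ≥ (n−1)·(∑_{w ∈ B_d(v)} d(v,w) − ũ + (d+2)·(r(v) − n_d(v))) / (r(v) − 1)²`. -/
theorem stmt4 {V : Type*} [Fintype V] (G : SimpleGraph V) (v : V) (d : ℕ) (u : ℕ)
    (hr : 2 ≤ (Finset.univ.filter fun w => G.Reachable v w).card)
    (hu : (Finset.univ.filter fun w => G.Reachable v w ∧ G.dist v w = d + 1).card ≤ u) :
    ((Fintype.card V : ℝ) - 1) *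
        ((∑ w ∈ Finset.univ.filter (fun w => G.Reachable v w ∧ G.dist v w ≤ d),
            (G.dist v w : ℝ))
          - (u : ℝ) + ((d : ℝ) + 2) *
            (((Finset.univ.filter fun w => G.Reachable v w).card : ℝ) -
              ((Finset.univ.filter fun w => G.Reachable v w ∧ G.dist v w ≤ d).card : ℝ))) /
        (((Finset.univ.filter fun w => G.Reachable v w).card : ℝ) - 1) ^ 2
      ≤ ((Fintype.card V : ℝ) - 1) *
          (∑ w ∈ Finset.univ.filter (fun w => G.Reachable v w), (G.dist v w : ℝ)) /
          (((Finset.univ.filter fun w => G.Reachable v w).card : ℝ) - 1) ^ 2 :=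
  stmt4_general G v d u hu
end

section
/- Let G be a finite simple undirected graph, s a vertex, and v a vertex reachable from s. Then S(v) ≥ 2·( #{ w ∈ R(s) : | d(s,w) − d(s,v) | ≤ 1 } − deg(v) − 1 ) + deg(v) + Σ_{w ∈ R(s), | d(s,w) − d(s,v) | > 1} | d(s,w) − d(s,v) |. (This improves the bound Σ_{w ∈ R(s)} |d(s,w) − d(s,v)| ≤ S(v) by using that v has exactly deg(v) vertices at distance 1, so every vertex w ≠ v with |d(s,w) − d(s,v)| ≤ 1 that is not a neighbor of v is at distance at least 2 from v.) -/
/-!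
Split the vertices reachable from `s` according to whether their level `d(s,w)` differs from
that of `v` by at most one. By the triangle inequality every `w` contributes at least
`|d(s,w) - d(s,v)|` to `S(v)`. On the near levels we do better: `v` itself contributes `0`, its
`deg v` neighbours (all on near levels) contribute `1` each, and every other vertex there is at
distance at least `2` from `v`.
-/

open Finset SimpleGraph
open scoped Classical

namespace SimpleGraph

variable {V : Type*} (G : SimpleGraph V)

theorem abs_dist_sub_dist_le_dist {s v w : V} (hv : G.Reachable s v) (hw : G.Reachable s w) :
    |(G.dist s w : ℤ) - G.dist s v| ≤ G.dist v w := by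
  have h₁ := hv.dist_triangle_left w
  have h₂ := hw.dist_triangle_left v
  rw [dist_comm (u := w)] at h₂
  rw [abs_sub_le_iff]
  constructor <;> omega

theorem sum_dist_insert_neighborFinset (v : V) [Fintype (G.neighborSet v)] :
    ∑ w ∈ insert v (G.neighborFinset v), G.dist v w = G.degree v := by
  rw [sum_insert (by simp), dist_self, zero_add,
    sum_congr rfl fun w hw => dist_eq_one_iff_adj.mpr ((G.mem_neighborFinset v w).mp hw)]
  simp

theorem two_mul_card_sub_degree_add_degree_le_sum_dist {v : V} [Fintype (G.neighborSet v)]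
    {A : Finset V} (hvA : v ∈ A) (hNA : G.neighborFinset v ⊆ A)
    (hreach : ∀ w ∈ A, G.Reachable v w) :
    2 * ((#A : ℤ) - G.degree v - 1) + G.degree v ≤ ∑ w ∈ A, (G.dist v w : ℤ) := by
  set N := insert v (G.neighborFinset v)
  have hN : N ⊆ A := insert_subset hvA hNA
  have hfar : 2 * #(A \ N) ≤ ∑ w ∈ A \ N, G.dist v w := by
    rw [mul_comm, card_eq_sum_ones, sum_mul, one_mul]
    refine sum_le_sum fun w hw => ?_
    obtain ⟨hwA, hwN⟩ := mem_sdiff.mp hw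
    rw [mem_insert, mem_neighborFinset, not_or] at hwN
    exact (hreach w hwA).one_lt_dist_of_ne_of_not_adj (Ne.symm hwN.1) hwN.2
  have hcard : #(A \ N) + (G.degree v + 1) = #A := by
    rw [← card_neighborFinset_eq_degree,
      ← card_insert_of_notMem (by simp : v ∉ G.neighborFinset v)]
    exact card_sdiff_add_card_eq_card hN
  have hsum : ∑ w ∈ A, G.dist v w = G.degree v + ∑ w ∈ A \ N, G.dist v w := by
    rw [← sum_sdiff hN, sum_dist_insert_neighborFinset, add_comm]
  push_cast [← Nat.cast_sum]
  omega

end SimpleGraph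

/-- The improved level-based lower bound: for `v` reachable from `s`,
`S(v) ≥ 2·(#{w ∈ R(s) : |d(s,w) − d(s,v)| ≤ 1} − deg v − 1) + deg v
      + ∑_{w ∈ R(s), |d(s,w) − d(s,v)| > 1} |d(s,w) − d(s,v)|`. -/
theorem stmt8 {V : Type*} [Fintype V] [DecidableEq V] (G : SimpleGraph V)
    [DecidableRel G.Adj] (s v : V) (hv : G.Reachable s v) :
    2 * (((Finset.univ.filter fun w =>
            G.Reachable s w ∧ |(G.dist s w : ℤ) - (G.dist s v : ℤ)| ≤ 1).card : ℤ)
          - (G.degree v : ℤ) - 1)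
        + (G.degree v : ℤ)
        + ∑ w ∈ Finset.univ.filter
            (fun w => G.Reachable s w ∧ 1 < |(G.dist s w : ℤ) - (G.dist s v : ℤ)|),
            |(G.dist s w : ℤ) - (G.dist s v : ℤ)|
      ≤ ∑ w ∈ Finset.univ.filter (fun w => G.Reachable v w), (G.dist v w : ℤ) := by
  set near := univ.filter fun w => G.Reachable s w ∧ |(G.dist s w : ℤ) - G.dist s v| ≤ 1
  set far := univ.filter fun w => G.Reachable s w ∧ 1 < |(G.dist s w : ℤ) - G.dist s v|
  have hreach (w : V) : G.Reachable v w ↔ G.Reachable s w := ⟨hv.trans, hv.symm.trans⟩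
  have hsplit : ∑ w ∈ univ.filter (fun w => G.Reachable v w), (G.dist v w : ℤ) =
      ∑ w ∈ near, (G.dist v w : ℤ) + ∑ w ∈ far, (G.dist v w : ℤ) := by
    rw [filter_congr fun w _ => hreach w, ← sum_filter_add_sum_filter_not _
      (fun w => |(G.dist s w : ℤ) - G.dist s v| ≤ 1), filter_filter, filter_filter]
    simp only [not_le, near, far]
  have hneighbors_near : G.neighborFinset v ⊆ near := fun w hw => by
    have hadj := (G.mem_neighborFinset v w).mp hw
    have hlevel := G.abs_dist_sub_dist_le_dist hv (hv.trans hadj.reachable)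
    rw [dist_eq_one_iff_adj.mpr hadj, Nat.cast_one] at hlevel
    simp [near, hv.trans hadj.reachable, hlevel]
  have hnear := G.two_mul_card_sub_degree_add_degree_le_sum_dist (by simp [near, hv])
    hneighbors_near fun w hw => (hreach w).mpr (mem_filter.mp hw).2.1
  have hfar : ∑ w ∈ far, |(G.dist s w : ℤ) - G.dist s v| ≤ ∑ w ∈ far, (G.dist v w : ℤ) :=
    sum_le_sum fun w hw => G.abs_dist_sub_dist_le_dist hv (mem_filter.mp hw).2.1
  linarith
end

section
/- Let n be a real number with n > 1, let r ≥ 3 be an integer, and let S : ℕ → ℝ be a function with S(ρ) > 0 for ρ ∈ {r−1, r, r+1} satisfying S(r+1) − S(r) ≤ S(r) − S(r−1). Define f(ρ) = (n−1)·S(ρ)/(ρ−1)². Then min( f(r+1), f(r−1) ) ≤ f(r). -/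
/-!
Put `x = r - 1`. If both `c / (x + 1)²` and `a / (x - 1)²` exceeded `b / x²`, then adding
the two bounds would give `a + c > b ((x + 1)² + (x - 1)²) / x² = 2b + 2b / x² > 2b`,
contradicting the concavity hypothesis `a + c ≤ 2b`.
-/

lemma min_div_sq_le_of_add_le_two_mul {a b c x : ℝ} (hb : 0 < b) (hx : x ≠ 0)
    (hx₁ : x - 1 ≠ 0) (hx₂ : x + 1 ≠ 0) (hconc : a + c ≤ 2 * b) :
    min (c / (x + 1) ^ 2) (a / (x - 1) ^ 2) ≤ b / x ^ 2 := by
  by_contra! h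
  obtain ⟨hc, ha⟩ := lt_min_iff.mp h
  rw [div_lt_div_iff₀ (by positivity) (by positivity)] at hc ha
  have hsum : b * ((x + 1) ^ 2 + (x - 1) ^ 2) < (a + c) * x ^ 2 := by linarith
  nlinarith [mul_le_mul_of_nonneg_right hconc (sq_nonneg x)]

/-- Lemma 3: if `S(r+1) − S(r) ≤ S(r) − S(r−1)` and `f(ρ) = (n−1)·S(ρ)/(ρ−1)²`, then
`min(f(r+1), f(r−1)) ≤ f(r)`. -/
theorem stmt10 (n : ℝ) (hn : 1 < n) (r : ℕ) (hr : 3 ≤ r) (S : ℕ → ℝ)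
    (hpos : ∀ ρ ∈ ({r - 1, r, r + 1} : Set ℕ), 0 < S ρ)
    (hconc : S (r + 1) - S r ≤ S r - S (r - 1)) :
    min ((n - 1) * S (r + 1) / (((r + 1 : ℕ) : ℝ) - 1) ^ 2)
        ((n - 1) * S (r - 1) / (((r - 1 : ℕ) : ℝ) - 1) ^ 2) ≤
      (n - 1) * S r / ((r : ℝ) - 1) ^ 2 := by
  have hr' : (3 : ℝ) ≤ r := by exact_mod_cast hr
  have hsucc : ((r + 1 : ℕ) : ℝ) - 1 = ((r : ℝ) - 1) + 1 := by push_cast; ring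
  have hpred : ((r - 1 : ℕ) : ℝ) - 1 = ((r : ℝ) - 1) - 1 := by
    rw [Nat.cast_sub (by omega : 1 ≤ r), Nat.cast_one]
  have key := min_div_sq_le_of_add_le_two_mul (x := (r : ℝ) - 1) (hpos r (by simp))
    (by linarith) (by linarith) (by linarith) (by linarith : S (r - 1) + S (r + 1) ≤ 2 * S r)
  rw [hsucc, hpred]
  simp only [mul_div_assoc, ← mul_min_of_nonneg _ _ (sub_nonneg.mpr hn.le)]
  exact mul_le_mul_of_nonneg_left key (by linarith)
end

section
/- Let (𝒱, ℰ) be a finite directed acyclic graph (i.e., there is no nontrivial directed cycle), let w : 𝒱 → ℝ≥0 be a weight function, and for C ∈ 𝒱 let Reach(C) denote the set of vertices reachable from C by a directed path (with C ∈ Reach(C)). Suppose ω : 𝒱 → ℝ satisfies, for every C, ω(C) = w(C) + Σ_{(C,D) ∈ ℰ} ω(D). Then for every C ∈ 𝒱, ω(C) ≥ Σ_{D ∈ Reach(C)} w(D). -/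
open Finset
open scoped Classical

/-!
Acyclicity makes "`D` is reachable from `C` by a nonempty path" a well-founded relation, so one
may argue by induction from the sinks upward. Every vertex reachable from `C` is `C` itself or is
reachable from a successor of `C`; as the weights are nonnegative, the weight of `Reach(C)` is
therefore at most `w C` plus the sum of the weights of the `Reach(D)` over the successors `D`,
and each of those is at most `ω D` by induction. The overlaps between the `Reach(D)` are why the
conclusion is an inequality.
-/

namespace Finset

variable {ι α M : Type*} [AddCommMonoid M] [PartialOrder M] [IsOrderedAddMonoid M]
  [DecidableEq α] {f : α → M}

theorem sum_union_le_of_nonneg (hf : ∀ a, 0 ≤ f a) (s t : Finset α) :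
    ∑ a ∈ s ∪ t, f a ≤ ∑ a ∈ s, f a + ∑ a ∈ t, f a := by
  rw [← sum_union_inter]
  exact le_add_of_nonneg_right (sum_nonneg fun a _ => hf a)

theorem sum_biUnion_le_sum_sum (hf : ∀ a, 0 ≤ f a) (s : Finset ι) (t : ι → Finset α) :
    ∑ a ∈ s.biUnion t, f a ≤ ∑ i ∈ s, ∑ a ∈ t i, f a := by
  rw [← sup_eq_biUnion]
  exact apply_sup_le_sum (f := fun u => ∑ a ∈ u, f a) sum_empty (sum_union_le_of_nonneg hf _ _) s

end Finset

namespace Relation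

variable {V : Type*} {E : V → V → Prop}

theorem wellFounded_swap_transGen [Finite V] (hacyc : ∀ C, ¬ TransGen E C C) :
    WellFounded (Function.swap (TransGen E)) :=
  have : Std.Irrefl (Function.swap (TransGen E)) := ⟨hacyc⟩
  have : IsTrans V (Function.swap (TransGen E)) := ⟨fun _ _ _ hab hbc => hbc.trans hab⟩
  Finite.wellFounded_of_trans_of_irrefl _

variable [Fintype V]

theorem filter_reflTransGen_subset_insert_biUnion (C : V) :
    univ.filter (ReflTransGen E C) ⊆
      insert C ((univ.filter (E C)).biUnion fun D => univ.filter (ReflTransGen E D)) := by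
  intro X hX
  simp only [mem_insert, mem_biUnion, mem_filter, mem_univ, true_and] at hX ⊢
  rcases hX.cases_head with rfl | ⟨D, hCD, hDX⟩
  · exact Or.inl rfl
  · exact Or.inr ⟨D, hCD, hDX⟩

theorem sum_filter_reflTransGen_le {M : Type*} [AddCommMonoid M] [PartialOrder M]
    [IsOrderedAddMonoid M] {w : V → M} (hw : ∀ C, 0 ≤ w C) (C : V) :
    ∑ X ∈ univ.filter (ReflTransGen E C), w X ≤
      w C + ∑ D ∈ univ.filter (E C), ∑ X ∈ univ.filter (ReflTransGen E D), w X :=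
  calc ∑ X ∈ univ.filter (ReflTransGen E C), w X
      ≤ ∑ X ∈ insert C ((univ.filter (E C)).biUnion fun D => univ.filter (ReflTransGen E D)),
          w X :=
        sum_le_sum_of_subset_of_nonneg (filter_reflTransGen_subset_insert_biUnion C)
          fun X _ _ => hw X
    _ ≤ w C + ∑ X ∈ (univ.filter (E C)).biUnion fun D => univ.filter (ReflTransGen E D), w X := by
        rw [insert_eq, ← sum_singleton w C]
        exact sum_union_le_of_nonneg hw _ _
    _ ≤ w C + ∑ D ∈ univ.filter (E C), ∑ X ∈ univ.filter (ReflTransGen E D), w X := by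
        grw [sum_biUnion_le_sum_sum hw]

end Relation

/-- In a finite DAG with nonnegative vertex weights, if
`ω C = w C + ∑_{(C,D) ∈ ℰ} ω D`, then `ω C ≥ ∑_{D ∈ Reach(C)} w D`. -/
theorem stmt12 {V : Type*} [Fintype V] (E : V → V → Prop)
    (hacyc : ∀ C : V, ¬ Relation.TransGen E C C)
    (w : V → ℝ) (hw : ∀ C, 0 ≤ w C) (ω : V → ℝ)
    (hω : ∀ C : V, ω C = w C + ∑ D ∈ Finset.univ.filter (fun D => E C D), ω D) :
    ∀ C : V, (∑ D ∈ Finset.univ.filter (fun D => Relation.ReflTransGen E C D), w D) ≤ ω C := by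
  intro C
  induction C using (Relation.wellFounded_swap_transGen hacyc).induction with
  | _ C ih =>
    calc ∑ D ∈ univ.filter (Relation.ReflTransGen E C), w D
        ≤ w C + ∑ D ∈ univ.filter (E C), ∑ X ∈ univ.filter (Relation.ReflTransGen E D), w X :=
          Relation.sum_filter_reflTransGen_le hw C
      _ ≤ w C + ∑ D ∈ univ.filter (E C), ω D := by
          gcongr with D hD
          exact ih D (.single (mem_filter.mp hD).2)
      _ = ω C := (hω C).symm
end

section
/- Let N and x be real numbers with N ≥ 2 and 0 < x ≤ N, let n be a real number with n > 1, and define c(R) = (36·(1+N) + x + 7R)² / ( (36·(1+2N) + x + 35R)·(n−1) ) for R ∈ [0, N]. Then c is strictly decreasing on the interval [0, N]; equivalently, for all 0 ≤ R ≤ N, the derivative numerator satisfies 7·35·R + 2·7·(36·(1+2N) + x) − 35·(36·(1+N) + x) < 0. -/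
/-!
With `A(R) = a + p R` and `B(R) = b + g R` affine, expanding around the larger point `t` gives
`A(t)² B(s) - A(s)² B(t) = (t - s) A(t) (2 p B(t) - g A(t)) - p² (t - s)² B(t)`,
so `A² / B` decreases as soon as `2 p B - g A = p g R + 2 p b - g a`, the numerator of its
derivative, is negative. For the reduction's constants this numerator is
`245 R - 756 - 252 N - 21 x`, negative whenever `R ≤ N`.
-/

theorem strictAntiOn_affine_sq_div_affine_mul {a b p g c : ℝ} {S : Set ℝ} (hc : 0 < c)
    (hA : ∀ R ∈ S, 0 < a + p * R) (hB : ∀ R ∈ S, 0 < b + g * R)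
    (hnum : ∀ R ∈ S, p * g * R + 2 * p * b - g * a < 0) :
    StrictAntiOn (fun R => (a + p * R) ^ 2 / ((b + g * R) * c)) S := by
  intro s hs t ht hst
  have hBs := hB s hs
  have hBt := hB t ht
  have hexpand : (a + p * t) ^ 2 * (b + g * s) - (a + p * s) ^ 2 * (b + g * t)
      = (t - s) * (a + p * t) * (p * g * t + 2 * p * b - g * a)
        - p ^ 2 * (t - s) ^ 2 * (b + g * t) := by ring
  have hfirst : (t - s) * (a + p * t) * (p * g * t + 2 * p * b - g * a) < 0 :=
    mul_neg_of_pos_of_neg (mul_pos (sub_pos.2 hst) (hA t ht)) (hnum t ht)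
  have hsecond : 0 ≤ p ^ 2 * (t - s) ^ 2 * (b + g * t) := by positivity
  show (a + p * t) ^ 2 / ((b + g * t) * c) < (a + p * s) ^ 2 / ((b + g * s) * c)
  rw [div_lt_div_iff₀ (by positivity) (by positivity)]
  nlinarith

theorem stmt14_general (N x n : ℝ) (hN : 2 ≤ N) (hx0 : 0 < x) (hn : 1 < n) :
    StrictAntiOn
        (fun R : ℝ =>
          (36 * (1 + N) + x + 7 * R) ^ 2 / ((36 * (1 + 2 * N) + x + 35 * R) * (n - 1)))
        (Set.Icc 0 N) ∧
      ∀ R : ℝ, 0 ≤ R → R ≤ N →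
        7 * 35 * R + 2 * 7 * (36 * (1 + 2 * N) + x) - 35 * (36 * (1 + N) + x) < 0 := by
  have hnum : ∀ R : ℝ, 0 ≤ R → R ≤ N →
      7 * 35 * R + 2 * 7 * (36 * (1 + 2 * N) + x) - 35 * (36 * (1 + N) + x) < 0 :=
    fun R _ hRN => by linarith
  refine ⟨strictAntiOn_affine_sq_div_affine_mul (sub_pos.2 hn) ?_ ?_
    (fun R hR => hnum R hR.1 hR.2), hnum⟩
  · rintro R ⟨hR0, -⟩
    linarith
  · rintro R ⟨hR0, -⟩
    linarith

/-- Monotonicity in the hardness reduction (p = 7, q = 36, g(p) = 35):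
`c(R) = (36(1+N)+x+7R)² / ((36(1+2N)+x+35R)(n−1))` is strictly decreasing on `[0, N]`;
equivalently the derivative numerator `7·35·R + 2·7·(36(1+2N)+x) − 35·(36(1+N)+x)` is
negative for `0 ≤ R ≤ N`. -/
theorem stmt14 (N x n : ℝ) (hN : 2 ≤ N) (hx0 : 0 < x) (hxN : x ≤ N) (hn : 1 < n) :
    StrictAntiOn
        (fun R : ℝ =>
          (36 * (1 + N) + x + 7 * R) ^ 2 / ((36 * (1 + 2 * N) + x + 35 * R) * (n - 1)))
        (Set.Icc 0 N) ∧
      ∀ R : ℝ, 0 ≤ R → R ≤ N →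
        7 * 35 * R + 2 * 7 * (36 * (1 + 2 * N) + x) - 35 * (36 * (1 + N) + x) < 0 :=
  stmt14_general N x n hN hx0 hn
end
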